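/- arXiv:2509.22938 — 2 statements merged into one kernel-verified Lean document; each statement's English description precedes it below -/
import Mathlib

section
/- For symmetric positive definite L ∈ ℝ^{m×m} and R ∈ ℝ^{n×n}, c = Trace(L) > 0, and any G ∈ ℝ^{m×n}: the matrix form of the Shampoo update, L^{-1/2} G R^{-1/2} · c^{1/2}, satisfies vec(L^{-1/2} G R^{-1/2} · c^{1/2}) = ((R ⊗ L)/c)^{-1/2} vec(G). -/
open Matrix Kronecker

-- The inverse of the positive-definite square root of a positive (semi)definite matrix.
open Classical in
noncomputable def invSqrt {k : Type*} [Fintype k] [DecidableEq k] (M : Matrix k k ℝ) :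
    Matrix k k ℝ :=
  if h : M.PosSemidef then
    (h.1.eigenvectorUnitary.1 * diagonal (Real.sqrt ∘ h.1.eigenvalues) *
      (star h.1.eigenvectorUnitary : Matrix k k ℝ))⁻¹ else 0

/-- Column-major vectorization of a matrix. -/
def vec {m n : ℕ} (G : Matrix (Fin m) (Fin n) ℝ) : Fin n × Fin m → ℝ :=
  fun p => G p.2 p.1

section aux

variable {m n : ℕ}

/-- A nonnegative scalar multiple of a PSD matrix is PSD. -/
lemma psd_smul {k : Type*} [Fintype k] {M : Matrix k k ℝ} (h : M.PosSemidef)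
    {a : ℝ} (ha : 0 ≤ a) : (a • M).PosSemidef := by
  refine ⟨?_, fun x => ?_⟩
  · unfold Matrix.IsHermitian
    rw [conjTranspose_smul, h.1]
    simp
  · exact (h.smul ha).2 x

lemma kron_conjTranspose (A : Matrix (Fin m) (Fin m) ℝ) (B : Matrix (Fin n) (Fin n) ℝ) :
    (B ⊗ₖ A)ᴴ = Bᴴ ⊗ₖ Aᴴ := by
  ext ⟨i, j⟩ ⟨k, l⟩
  simp [conjTranspose_apply, kroneckerMap_apply]

/-- Kronecker product of PSD matrices is PSD. -/
lemma psd_kron {A : Matrix (Fin m) (Fin m) ℝ} {B : Matrix (Fin n) (Fin n) ℝ}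
    (hA : A.PosSemidef) (hB : B.PosSemidef) : (B ⊗ₖ A).PosSemidef := by
  exact hB.kronecker hA

/-- The key vectorization identity `(B ⊗ A) vec G = vec (A G Bᵀ)`. -/
lemma kron_mulVec (A : Matrix (Fin m) (Fin m) ℝ) (B : Matrix (Fin n) (Fin n) ℝ)
    (G : Matrix (Fin m) (Fin n) ℝ) :
    (B ⊗ₖ A) *ᵥ (fun p => G p.2 p.1) = fun p => (A * G * Bᵀ) p.2 p.1 := by
  funext ⟨j, i⟩
  simp only [Matrix.mulVec, dotProduct, Fintype.sum_prod_type, kroneckerMap_apply,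
    Matrix.mul_apply, transpose_apply, Finset.sum_mul, Finset.mul_sum]
  rw [Finset.sum_comm]
  conv_rhs => rw [Finset.sum_comm]
  apply Finset.sum_congr rfl; intro k _
  apply Finset.sum_congr rfl; intro l _
  ring

end aux

section sqrtaux

open scoped MatrixOrder

/-- The positive semidefinite square root of a matrix. -/
noncomputable def msqrt {k : Type*} [Fintype k] [DecidableEq k] (M : Matrix k k ℝ) :
    Matrix k k ℝ :=
  CFC.sqrt M

lemma invSqrt_eq {k : Type*} [Fintype k] [DecidableEq k] {M : Matrix k k ℝ}
    (hM : M.PosSemidef) : invSqrt M = (msqrt M)⁻¹ := by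
  unfold invSqrt msqrt
  rw [dif_pos hM, CFC.sqrt_eq_cfc, cfc_nnreal_eq_real _ M, hM.1.cfc_eq]
  congr 1
  simp [IsHermitian.cfc]
  rw [show ((fun x : ℝ => √(max x 0)) ∘ hM.1.eigenvalues) = Real.sqrt ∘ hM.1.eigenvalues from
    funext fun i => by simp [hM.eigenvalues_nonneg i]]

lemma msqrt_mul_self {k : Type*} [Fintype k] [DecidableEq k] {M : Matrix k k ℝ}
    (hM : M.PosSemidef) : msqrt M * msqrt M = M :=
  CFC.sqrt_mul_sqrt_self M hM.nonneg

lemma msqrt_psd {k : Type*} [Fintype k] [DecidableEq k] (M : Matrix k k ℝ) :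
    (msqrt M).PosSemidef :=
  (CFC.sqrt_nonneg M).posSemidef

lemma msqrt_eq {k : Type*} [Fintype k] [DecidableEq k] {M B : Matrix k k ℝ}
    (hM : M.PosSemidef) (hB : B.PosSemidef) (h : B ^ 2 = M) : msqrt M = B :=
  (CFC.sqrt_eq_iff M B hM.nonneg hB.nonneg).2 (by rw [← sq]; exact h)

end sqrtaux

/-- The matrix form of the Shampoo update agrees with the vectorized preconditioned form:
`vec(L^{-1/2} G R^{-1/2} · c^{1/2}) = ((R ⊗ L)/c)^{-1/2} vec(G)`, where `c = Trace L > 0`. -/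
theorem shampoo_matrix_form_eq_vectorized {m n : ℕ}
    (L : Matrix (Fin m) (Fin m) ℝ) (R : Matrix (Fin n) (Fin n) ℝ)
    (hL : L.PosDef) (hR : R.PosDef) (hc : 0 < L.trace)
    (G : Matrix (Fin m) (Fin n) ℝ) :
    _root_.vec (Real.sqrt L.trace • (invSqrt L * G * invSqrt R)) =
      invSqrt (L.trace⁻¹ • (R ⊗ₖ L)) *ᵥ _root_.vec G := by
  have hLs := hL.posSemidef
  have hRs := hR.posSemidef
  set c := L.trace with hcdef
  set sL := msqrt L with hsL
  set sR := msqrt R with hsR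
  have hsLmul : sL * sL = L := msqrt_mul_self hLs
  have hsRmul : sR * sR = R := msqrt_mul_self hRs
  have hsLpsd : sL.PosSemidef := msqrt_psd L
  have hsRpsd : sR.PosSemidef := msqrt_psd R
  -- invertibility of sqrts
  have hdetL : IsUnit sL.det := by
    have h2 : sL.det * sL.det = L.det := by rw [← det_mul, hsLmul]
    exact isUnit_iff_ne_zero.mpr (fun h => by simp [h] at h2; exact hL.det_pos.ne' h2.symm)
  have hdetR : IsUnit sR.det := by
    have h2 : sR.det * sR.det = R.det := by rw [← det_mul, hsRmul]
    exact isUnit_iff_ne_zero.mpr (fun h => by simp [h] at h2; exact hR.det_pos.ne' h2.symm)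
  -- unfold invSqrt
  have hiL : invSqrt L = sL⁻¹ := by rw [invSqrt_eq hLs]
  have hiR : invSqrt R = sR⁻¹ := by rw [invSqrt_eq hRs]
  -- sqrt of the scaled Kronecker product
  set S := sR ⊗ₖ sL with hS
  have hSpsd : S.PosSemidef := psd_kron hsLpsd hsRpsd
  have hS2 : S ^ 2 = R ⊗ₖ L := by
    rw [pow_two, hS, ← Matrix.mul_kronecker_mul, hsLmul, hsRmul]
  have hKpsd' : (c⁻¹ • (R ⊗ₖ L)).PosSemidef :=
    psd_smul (psd_kron hLs hRs) (inv_nonneg.mpr hc.le)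
  set a := (Real.sqrt c)⁻¹ with hadef
  have ha : 0 ≤ a := inv_nonneg.mpr (Real.sqrt_nonneg _)
  have hA2 : (a • S) ^ 2 = c⁻¹ • (R ⊗ₖ L) := by
    rw [smul_pow, hS2]
    congr 1
    rw [hadef, ← Real.sq_sqrt hc.le]
    ring_nf
    rw [Real.sq_sqrt hc.le]
  have hsqrtK : msqrt (c⁻¹ • (R ⊗ₖ L)) = a • S :=
    msqrt_eq hKpsd' (psd_smul hSpsd ha) hA2
  have hsc : Real.sqrt c ≠ 0 := (Real.sqrt_pos.2 hc).ne'
  have hinv : (a • S)⁻¹ = Real.sqrt c • (sR⁻¹ ⊗ₖ sL⁻¹) := by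
    apply Matrix.inv_eq_left_inv
    rw [smul_mul_smul_comm, hS, ← Matrix.mul_kronecker_mul,
      Matrix.nonsing_inv_mul _ hdetR, Matrix.nonsing_inv_mul _ hdetL,
      hadef, mul_inv_cancel₀ hsc, Matrix.one_kronecker_one, one_smul]
  have hiK : invSqrt (c⁻¹ • (R ⊗ₖ L)) = Real.sqrt c • (sR⁻¹ ⊗ₖ sL⁻¹) := by
    rw [invSqrt_eq hKpsd', hsqrtK, hinv]
  -- transpose of sR⁻¹
  have hsRT : (sR⁻¹)ᵀ = sR⁻¹ := by
    rw [Matrix.transpose_nonsing_inv]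
    congr 1
    have := hsRpsd.1
    rwa [Matrix.IsHermitian, Matrix.conjTranspose_eq_transpose_of_trivial] at this
  rw [hiL, hiR, hiK, Matrix.smul_mulVec]
  have hvec : (sR⁻¹ ⊗ₖ sL⁻¹) *ᵥ _root_.vec G = _root_.vec (sL⁻¹ * G * sR⁻¹) := by
    have h := kron_mulVec sL⁻¹ sR⁻¹ G
    rw [hsRT] at h
    exact h
  rw [hvec]
  rfl
end

section
/- If Σ = (R ⊗ L)/Trace(L) with L, R symmetric positive definite, then the Kronecker factorization of Σ is unique up to a positive scalar: if Σ = (R' ⊗ L')/Trace(L') with L', R' symmetric positive definite, then there exists c > 0 with L' = cL and R' = R/c · (Trace(L')/Trace(L)) appropriately scaled so that R' ⊗ L' / Trace(L') = R ⊗ L / Trace(L). -/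
open Matrix Kronecker

lemma posdef_diag_pos {k : ℕ} {A : Matrix (Fin k) (Fin k) ℝ} (hA : A.PosDef) (i : Fin k) :
    0 < A i i := by
  have := hA.dotProduct_mulVec_pos (x := Pi.single i 1) (by simp [Function.ne_iff])
  simpa [dotProduct, mulVec, Pi.single_apply, Finset.sum_ite_eq] using this

/-- Kronecker factors of a positive-definite matrix are unique up to a positive scalar:
if `R ⊗ L = R' ⊗ L'` with all factors symmetric positive definite, then `R' = a • R` and
`L' = a⁻¹ • L` for some `a > 0`. -/
theorem kronecker_factorization_unique_up_to_scalar {m n : ℕ}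
    (hm : 0 < m) (hn : 0 < n)
    (L L' : Matrix (Fin m) (Fin m) ℝ) (R R' : Matrix (Fin n) (Fin n) ℝ)
    (hL : L.PosDef) (hL' : L'.PosDef) (hR : R.PosDef) (hR' : R'.PosDef)
    (heq : R ⊗ₖ L = R' ⊗ₖ L') :
    ∃ a : ℝ, 0 < a ∧ R' = a • R ∧ L' = a⁻¹ • L := by
  set i0 : Fin m := ⟨0, hm⟩
  set j0 : Fin n := ⟨0, hn⟩
  have key : ∀ (i j : Fin n) (k l : Fin m), R i j * L k l = R' i j * L' k l := by
    intro i j k l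
    have := congrFun (congrFun heq (i, k)) (j, l)
    simpa [kroneckerMap_apply] using this
  have hLd : 0 < L i0 i0 := posdef_diag_pos hL i0
  have hL'd : 0 < L' i0 i0 := posdef_diag_pos hL' i0
  have hRd : 0 < R j0 j0 := posdef_diag_pos hR j0
  set a : ℝ := L i0 i0 / L' i0 i0 with ha
  have hapos : 0 < a := div_pos hLd hL'd
  refine ⟨a, hapos, ?_, ?_⟩
  · ext i j
    have := key i j i0 i0
    simp only [Matrix.smul_apply, smul_eq_mul, ha]
    field_simp
    linarith [this]
  · ext k l
    have := key j0 j0 k l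
    simp only [Matrix.smul_apply, smul_eq_mul, ha]
    rw [inv_div]
    field_simp
    have h2 := key j0 j0 i0 i0
    have hRne : R j0 j0 ≠ 0 := hRd.ne'
    field_simp at this h2 ⊢
    refine mul_left_cancel₀ hRne ?_
    linear_combination L' k l * h2 - L' i0 i0 * this
end
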